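/- In 𝒲 = U(𝔤) ⊗ Cl(𝔤), the element 𝔇² is central: 𝔇²·w = w·𝔇² for all w ∈ 𝒲. (Consequently the super-commutator with 𝔇 is a differential on 𝒲.) -/

import Mathlib

/-!
Write `θ_b = u_b ⊗ 1 + 1 ⊗ g_b` for the diagonal action of `e_b` on `𝒲`. Two identities carry the
proof: `𝔇 (1 ⊗ x_b) + (1 ⊗ x_b) 𝔇 = θ_b`, and `θ_b` commutes with `𝔇` (the diagonal action is
by derivations, `g_b` commutes with `γ` by the Jacobi identity, and the two contributions to
`[θ_b, Σ u_a ⊗ x_a]` cancel by antisymmetry of `f`). The ring identity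
`[𝔇², y] = [𝔇, 𝔇 y + y 𝔇]` then shows that `𝔇²` commutes with every `1 ⊗ x_b`, hence with
`1 ⊗ Cl(𝔤)`, and so with `u_b ⊗ 1 = θ_b - 1 ⊗ g_b`. These generate `𝒲`.
-/

open scoped TensorProduct

structure IsTotallyAntisymm {n : ℕ} (f : Fin n → Fin n → Fin n → ℝ) : Prop where
  swap_left : ∀ a b c, f b a c = -f a b c
  rotate : ∀ a b c, f b c a = f a b c

theorem IsTotallyAntisymm.swap_right {n : ℕ} {f : Fin n → Fin n → Fin n → ℝ}
    (hf : IsTotallyAntisymm f) (a b c : Fin n) : f a c b = -f a b c := by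
  rw [← hf.rotate a c b, hf.swap_left, hf.rotate]

/-- The `e_s`-component of `[e_a, [e_b, e_c]] + [e_b, [e_c, e_a]] + [e_c, [e_a, e_b]] = 0`. -/
def IsJacobi {n : ℕ} (f : Fin n → Fin n → Fin n → ℝ) : Prop :=
  ∀ a b c s, ∑ k, (f b c k * f a k s + f c a k * f b k s + f a b k * f c k s) = 0

/-- With `f` totally antisymmetric, the Jacobi identity says that `ad e_a` kills the 3-form `f`. -/
theorem IsJacobi.sum_ad_invariant {n : ℕ} {f : Fin n → Fin n → Fin n → ℝ} (hJ : IsJacobi f)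
    (hf : IsTotallyAntisymm f) (a p q s : Fin n) :
    ∑ k, (f a k p * f k q s + f a k q * f p k s + f a k s * f p q k) = 0 := by
  rw [← hJ a p q s]
  refine Finset.sum_congr rfl fun k _ => ?_
  rw [hf.rotate q a k, hf.rotate p a k, hf.swap_left a p k, hf.swap_left q k s]
  ring

theorem sum_smul_sum_smul {n : ℕ} {V : Type*} [AddCommGroup V] [Module ℝ V] (c : Fin n → ℝ)
    (M : Fin n → Fin n → ℝ) (v : Fin n → V) :
    ∑ p, c p • ∑ r, M p r • v r = ∑ r, (∑ p, M p r * c p) • v r := by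
  simp only [Finset.smul_sum, smul_smul, Finset.sum_smul]
  rw [Finset.sum_comm]
  simp only [mul_comm]

section Clifford

attribute [local instance] LieRing.ofAssociativeRing

variable {n : ℕ} {C : Type*} [Ring C] {f : Fin n → Fin n → Fin n → ℝ} {x : Fin n → C}

theorem lie_mul_mul (hx : ∀ a b, x a * x b + x b * x a = if a = b then 1 else 0)
    (r s b : Fin n) :
    ⁅x r * x s, x b⁆ = (if s = b then x r else 0) - (if r = b then x s else 0) := by
  have h : ⁅x r * x s, x b⁆ = x r * (x s * x b + x b * x s) - (x r * x b + x b * x r) * x s := by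
    rw [Ring.lie_def]; noncomm_ring
  simp only [h, hx, mul_ite, ite_mul, mul_one, one_mul, mul_zero, zero_mul]

theorem mul_triple_add_triple_mul (hx : ∀ a b, x a * x b + x b * x a = if a = b then 1 else 0)
    (a b c d : Fin n) :
    x a * (x b * x c * x d) + x b * x c * x d * x a =
      (if a = b then x c * x d else 0) - (if a = c then x b * x d else 0) +
        (if a = d then x b * x c else 0) := by
  have h : x a * (x b * x c * x d) + x b * x c * x d * x a =
      (x a * x b + x b * x a) * x c * x d - x b * (x a * x c + x c * x a) * x d +
        x b * x c * (x a * x d + x d * x a) := by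
    noncomm_ring
  simp only [h, hx, mul_ite, ite_mul, mul_one, one_mul, mul_zero, zero_mul]

variable [Algebra ℝ C]

variable (x) in
def cubicForm (T : Fin n → Fin n → Fin n → ℝ) : C := ∑ p, ∑ q, ∑ s, T p q s • (x p * x q * x s)

variable (f x) in
/-- The element `g_a`. -/
noncomputable def spinAd (a : Fin n) : C := (-(1 / 2 : ℝ)) • ∑ r, ∑ s, f a r s • (x r * x s)

variable (f x) in
/-- The element `γ`. -/
noncomputable def cubicElement : C := (-(1 / 6 : ℝ)) • cubicForm x f

theorem sum_subst_left_eq_cubicForm (M : Fin n → Fin n → ℝ) (T : Fin n → Fin n → Fin n → ℝ) :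
    ∑ p, ∑ q, ∑ s, T p q s • ((∑ r, M p r • x r) * x q * x s) =
      cubicForm x fun p q s => ∑ k, M k p * T k q s := by
  conv_lhs => rw [Finset.sum_comm_cycle, Finset.sum_comm_cycle]
  conv_rhs => rw [cubicForm, Finset.sum_comm_cycle, Finset.sum_comm_cycle]
  refine Finset.sum_congr rfl fun q _ => Finset.sum_congr rfl fun s _ => ?_
  have pull : ∀ (c : Fin n → ℝ) (y : Fin n → C),
      ∑ p, c p • (y p * x q * x s) = (∑ p, c p • y p) * x q * x s := by
    intro c y; simp only [Finset.sum_mul, smul_mul_assoc]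
  rw [pull, pull, sum_smul_sum_smul]

theorem sum_subst_mid_eq_cubicForm (M : Fin n → Fin n → ℝ) (T : Fin n → Fin n → Fin n → ℝ) :
    ∑ p, ∑ q, ∑ s, T p q s • (x p * (∑ r, M q r • x r) * x s) =
      cubicForm x fun p q s => ∑ k, M k q * T p k s := by
  refine Finset.sum_congr rfl fun p _ => ?_
  rw [Finset.sum_comm, Finset.sum_comm (f := fun q s => _ • (x p * x q * x s))]
  refine Finset.sum_congr rfl fun s _ => ?_
  have pull : ∀ (c : Fin n → ℝ) (y : Fin n → C),
      ∑ q, c q • (x p * y q * x s) = x p * (∑ q, c q • y q) * x s := by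
    intro c y; simp only [Finset.sum_mul, Finset.mul_sum, smul_mul_assoc, mul_smul_comm]
  rw [pull, pull, sum_smul_sum_smul]

theorem sum_subst_right_eq_cubicForm (M : Fin n → Fin n → ℝ) (T : Fin n → Fin n → Fin n → ℝ) :
    ∑ p, ∑ q, ∑ s, T p q s • (x p * x q * ∑ r, M s r • x r) =
      cubicForm x fun p q s => ∑ k, M k s * T p q k := by
  refine Finset.sum_congr rfl fun p _ => Finset.sum_congr rfl fun q _ => ?_
  have pull : ∀ (c : Fin n → ℝ) (y : Fin n → C),
      ∑ s, c s • (x p * x q * y s) = x p * x q * ∑ s, c s • y s := by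
    intro c y; simp only [Finset.mul_sum, mul_smul_comm]
  rw [pull, pull, sum_smul_sum_smul]

theorem lie_cubicForm {G : C} {M : Fin n → Fin n → ℝ} (hG : ∀ b, ⁅G, x b⁆ = ∑ r, M b r • x r)
    (T : Fin n → Fin n → Fin n → ℝ) :
    ⁅G, cubicForm x T⁆ = cubicForm x fun p q s =>
      ∑ k, (M k p * T k q s + M k q * T p k s + M k s * T p q k) := by
  have leibniz : ∀ p q s, ⁅G, x p * x q * x s⁆ =
      ⁅G, x p⁆ * x q * x s + x p * ⁅G, x q⁆ * x s + x p * x q * ⁅G, x s⁆ := by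
    intro p q s; simp only [Ring.lie_def]; noncomm_ring
  rw [cubicForm]
  simp only [lie_sum, lie_smul, leibniz, hG, smul_add, Finset.sum_add_distrib,
    sum_subst_left_eq_cubicForm, sum_subst_mid_eq_cubicForm, sum_subst_right_eq_cubicForm]
  simp only [cubicForm, add_smul, Finset.sum_add_distrib, Finset.sum_smul]

theorem spinAd_lie (hx : ∀ a b, x a * x b + x b * x a = if a = b then 1 else 0)
    (hf : IsTotallyAntisymm f) (a b : Fin n) :
    ⁅spinAd f x a, x b⁆ = ∑ r, f a b r • x r := by
  simp only [spinAd, smul_lie, sum_lie, lie_mul_mul hx, smul_sub, smul_ite, smul_zero,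
    Finset.sum_sub_distrib, Finset.sum_ite_eq', Finset.mem_univ, if_true]
  rw [Finset.sum_comm]
  simp only [Finset.sum_ite_eq', Finset.mem_univ, if_true, hf.swap_right a _ b, neg_smul,
    Finset.sum_neg_distrib]
  module

theorem mul_cubicElement_add (hx : ∀ a b, x a * x b + x b * x a = if a = b then 1 else 0)
    (hf : IsTotallyAntisymm f) (a : Fin n) :
    x a * cubicElement f x + cubicElement f x * x a = spinAd f x a := by
  have hlin : ∀ y : C,
      x a * y + y * x a = (LinearMap.mulLeft ℝ (x a) + LinearMap.mulRight ℝ (x a)) y :=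
    fun _ => rfl
  rw [cubicElement, cubicForm, hlin]
  simp only [map_smul, map_sum]
  simp only [← hlin, mul_triple_add_triple_mul hx, smul_add, smul_sub, smul_ite, smul_zero,
    Finset.sum_add_distrib, Finset.sum_sub_distrib, Finset.sum_ite_irrel, Finset.sum_const_zero,
    Finset.sum_ite_eq, Finset.mem_univ, if_true, hf.swap_left a, hf.rotate, neg_smul,
    Finset.sum_neg_distrib, spinAd]
  module

theorem spinAd_lie_cubicElement (hx : ∀ a b, x a * x b + x b * x a = if a = b then 1 else 0)
    (hf : IsTotallyAntisymm f) (hJ : IsJacobi f) (a : Fin n) :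
    ⁅spinAd f x a, cubicElement f x⁆ = 0 := by
  rw [cubicElement, lie_smul, lie_cubicForm (spinAd_lie hx hf a),
    funext fun p => funext fun q => funext fun s => hJ.sum_ad_invariant hf a p q s]
  simp only [cubicForm, zero_smul, Finset.sum_const_zero, smul_zero]

end Clifford

section Tensor

attribute [local instance] LieRing.ofAssociativeRing

variable {R A B : Type*} [CommRing R] [Ring A] [Algebra R A] [Ring B] [Algebra R B]

theorem lie_tmul_one_tmul (a a' : A) (b : B) :
    ⁅a ⊗ₜ[R] (1 : B), a' ⊗ₜ[R] b⁆ = ⁅a, a'⁆ ⊗ₜ[R] b := by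
  simp only [Ring.lie_def, Algebra.TensorProduct.tmul_mul_tmul, one_mul, mul_one,
    TensorProduct.sub_tmul]

theorem lie_one_tmul_tmul (b b' : B) (a : A) :
    ⁅(1 : A) ⊗ₜ[R] b, a ⊗ₜ[R] b'⁆ = a ⊗ₜ[R] ⁅b, b'⁆ := by
  simp only [Ring.lie_def, Algebra.TensorProduct.tmul_mul_tmul, one_mul, mul_one,
    TensorProduct.tmul_sub]

theorem AlgHom.commute_of_adjoin_eq_top (φ : B →ₐ[R] A) {t : Set B}
    (ht : Algebra.adjoin R t = ⊤) {z : A} (hz : ∀ b ∈ t, Commute z (φ b)) (b : B) :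
    Commute z (φ b) := by
  have : Algebra.adjoin R t ≤ (Subalgebra.centralizer R {z}).comap φ :=
    Algebra.adjoin_le fun b hb => (Subalgebra.mem_centralizer_iff R).mpr
      fun _ hg => (Set.mem_singleton_iff.mp hg) ▸ hz b hb
  exact (Subalgebra.mem_centralizer_iff R).mp (this (ht ▸ Algebra.mem_top)) z rfl

theorem Algebra.TensorProduct.commute_of_commute_tmul {z : A ⊗[R] B}
    (hA : ∀ a, Commute z (a ⊗ₜ 1)) (hB : ∀ b, Commute z (1 ⊗ₜ b)) (w : A ⊗[R] B) :
    Commute z w := by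
  induction w using TensorProduct.induction_on with
  | zero => exact Commute.zero_right z
  | tmul a b =>
    have hab : a ⊗ₜ[R] b = a ⊗ₜ 1 * 1 ⊗ₜ b := by
      rw [Algebra.TensorProduct.tmul_mul_tmul, mul_one, one_mul]
    exact hab ▸ (hA a).mul_right (hB b)
  | add w w' hw hw' => exact hw.add_right hw'

end Tensor

theorem commute_mul_self_of_commute_anticomm {R : Type*} [Ring R] {a y : R}
    (h : Commute a (a * y + y * a)) : Commute (a * a) y :=
  calc a * a * y = a * (a * y + y * a) - a * y * a := by noncomm_ring
    _ = (a * y + y * a) * a - a * y * a := by rw [h.eq]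
    _ = y * (a * a) := by noncomm_ring

section Dirac

attribute [local instance] LieRing.ofAssociativeRing

variable {n : ℕ} {U C : Type*} [Ring U] [Algebra ℝ U] [Ring C] [Algebra ℝ C]
  {f : Fin n → Fin n → Fin n → ℝ} {u : Fin n → U} {x : Fin n → C}

variable (f u x) in
noncomputable def cubicDirac : U ⊗[ℝ] C := ∑ a, u a ⊗ₜ[ℝ] x a + 1 ⊗ₜ[ℝ] cubicElement f x

theorem cubicDirac_mul_add (hx : ∀ a b, x a * x b + x b * x a = if a = b then 1 else 0)
    (hf : IsTotallyAntisymm f) (b : Fin n) :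
    cubicDirac f u x * (1 ⊗ₜ[ℝ] x b) + (1 ⊗ₜ[ℝ] x b) * cubicDirac f u x =
      u b ⊗ₜ[ℝ] 1 + 1 ⊗ₜ[ℝ] spinAd f x b := by
  simp only [cubicDirac, add_mul, mul_add, Finset.sum_mul, Finset.mul_sum,
    Algebra.TensorProduct.tmul_mul_tmul, mul_one, one_mul]
  rw [add_add_add_comm, ← Finset.sum_add_distrib, ← TensorProduct.tmul_add,
    add_comm (cubicElement f x * x b), mul_cubicElement_add hx hf]
  simp only [← TensorProduct.tmul_add, hx, TensorProduct.tmul_ite, Finset.sum_ite_eq',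
    Finset.mem_univ, if_true]

theorem lie_cubicDirac (hu : ∀ a b, u a * u b - u b * u a = ∑ c, f a b c • u c)
    (hx : ∀ a b, x a * x b + x b * x a = if a = b then 1 else 0) (hf : IsTotallyAntisymm f)
    (hJ : IsJacobi f) (b : Fin n) :
    ⁅u b ⊗ₜ[ℝ] 1 + 1 ⊗ₜ[ℝ] spinAd f x b, cubicDirac f u x⁆ = 0 := by
  have hu' : ∀ a b, ⁅u a, u b⁆ = ∑ c, f a b c • u c := fun a b => (Ring.lie_def _ _).trans (hu a b)
  simp only [cubicDirac, add_lie, lie_add, lie_sum, lie_tmul_one_tmul, lie_one_tmul_tmul, hu',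
    spinAd_lie hx hf, spinAd_lie_cubicElement hx hf hJ, TensorProduct.sum_tmul,
    TensorProduct.tmul_sum, (Commute.one_right (u b)).lie_eq, TensorProduct.zero_tmul,
    TensorProduct.tmul_zero, add_zero, ← TensorProduct.smul_tmul', TensorProduct.tmul_smul,
    Finset.sum_add_distrib]
  rw [Finset.sum_comm (f := fun a c => f b a c • u a ⊗ₜ[ℝ] x c), ← Finset.sum_add_distrib]
  refine Finset.sum_eq_zero fun a _ => ?_
  rw [← Finset.sum_add_distrib]
  refine Finset.sum_eq_zero fun c _ => ?_
  rw [hf.swap_right b a c, neg_smul, add_neg_cancel]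

theorem commute_cubicDirac_mul_self (hu : ∀ a b, u a * u b - u b * u a = ∑ c, f a b c • u c)
    (hx : ∀ a b, x a * x b + x b * x a = if a = b then 1 else 0) (hf : IsTotallyAntisymm f)
    (hJ : IsJacobi f) (hu_gen : Algebra.adjoin ℝ (Set.range u) = ⊤)
    (hx_gen : Algebra.adjoin ℝ (Set.range x) = ⊤) (w : U ⊗[ℝ] C) :
    Commute (cubicDirac f u x * cubicDirac f u x) w := by
  set D := cubicDirac f u x
  have hθ : ∀ b, Commute D (u b ⊗ₜ[ℝ] 1 + 1 ⊗ₜ[ℝ] spinAd f x b) := fun b =>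
    (commute_iff_lie_eq.mpr (lie_cubicDirac hu hx hf hJ b)).symm
  have hC : ∀ c : C, Commute (D * D) (1 ⊗ₜ[ℝ] c) :=
    (Algebra.TensorProduct.includeRight : C →ₐ[ℝ] U ⊗[ℝ] C).commute_of_adjoin_eq_top hx_gen <| by
      rintro _ ⟨b, rfl⟩
      exact commute_mul_self_of_commute_anticomm (cubicDirac_mul_add (u := u) hx hf b ▸ hθ b)
  have hU : ∀ p : U, Commute (D * D) (p ⊗ₜ[ℝ] 1) :=
    (Algebra.TensorProduct.includeLeft : U →ₐ[ℝ] U ⊗[ℝ] C).commute_of_adjoin_eq_top hu_gen <| by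
      rintro _ ⟨b, rfl⟩
      rw [Algebra.TensorProduct.includeLeft_apply, ← add_sub_cancel_right (u b ⊗ₜ[ℝ] 1)
        (1 ⊗ₜ[ℝ] spinAd f x b)]
      exact ((hθ b).mul_left (hθ b)).sub_right (hC _)
  exact Algebra.TensorProduct.commute_of_commute_tmul hU hC w

end Dirac

theorem Module.Basis.sum_bilin_smul_of_orthonormal {n : ℕ} {M : Type*} [AddCommGroup M] [Module ℝ M]
    {B : LinearMap.BilinForm ℝ M} {e : Module.Basis (Fin n) ℝ M}
    (he : ∀ a b, B (e a) (e b) = if a = b then 1 else 0) (v : M) :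
    ∑ c, B v (e c) • e c = v := by
  have hrepr : ∀ c, B v (e c) = e.repr v c := fun c =>
    calc B v (e c) = B (∑ i, e.repr v i • e i) (e c) := by rw [e.sum_repr]
      _ = e.repr v c := by
        simp only [map_sum, map_smul, LinearMap.sum_apply, LinearMap.smul_apply, he, smul_eq_mul,
          mul_ite, mul_one, mul_zero, Finset.sum_ite_eq', Finset.mem_univ, if_true]
  simp only [hrepr, e.sum_repr]

section StructureConstants

variable {n : ℕ} {L : Type*} [LieRing L] [LieAlgebra ℝ L]

noncomputable def structureConst (B : LinearMap.BilinForm ℝ L) (e : Module.Basis (Fin n) ℝ L)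
    (a b c : Fin n) : ℝ :=
  B ⁅e a, e b⁆ (e c)

variable {B : LinearMap.BilinForm ℝ L} {e : Module.Basis (Fin n) ℝ L}

theorem isTotallyAntisymm_structureConst (hB : ∀ v w, B v w = B w v)
    (hinv : ∀ v w z : L, B ⁅v, w⁆ z + B w ⁅v, z⁆ = 0) : IsTotallyAntisymm (structureConst B e) where
  swap_left a b c := by
    rw [structureConst, structureConst, ← lie_skew, map_neg, LinearMap.neg_apply]
  rotate a b c := by
    rw [structureConst, structureConst, eq_neg_of_add_eq_zero_left (hinv (e b) (e c) (e a)),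
      hB, ← lie_skew, map_neg, LinearMap.neg_apply, neg_neg]

theorem lie_eq_sum_structureConst (he : ∀ a b, B (e a) (e b) = if a = b then 1 else 0)
    (a b : Fin n) : ⁅e a, e b⁆ = ∑ c, structureConst B e a b c • e c :=
  (Module.Basis.sum_bilin_smul_of_orthonormal he _).symm

theorem isJacobi_structureConst (he : ∀ a b, B (e a) (e b) = if a = b then 1 else 0) :
    IsJacobi (structureConst B e) := by
  have hexpand : ∀ a v s, B ⁅e a, v⁆ (e s) = ∑ k, B v (e k) * structureConst B e a k s := by
    intro a v s
    conv_lhs => rw [← Module.Basis.sum_bilin_smul_of_orthonormal he v]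
    simp only [lie_sum, lie_smul, map_sum, map_smul, LinearMap.sum_apply, LinearMap.smul_apply,
      smul_eq_mul, structureConst]
  intro a b c s
  have h := congrArg (fun v => B v (e s)) (lie_jacobi (e a) (e b) (e c))
  simp only [map_add, LinearMap.add_apply, map_zero, LinearMap.zero_apply] at h
  rw [hexpand a, hexpand b, hexpand c, ← Finset.sum_add_distrib, ← Finset.sum_add_distrib] at h
  exact h

end StructureConstants

theorem CliffordAlgebra.ι_mul_ι_add_swap_of_eq_half {M : Type*} [AddCommGroup M] [Module ℝ M]
    {B : LinearMap.BilinForm ℝ M} (hB : ∀ v w, B v w = B w v) {Q : QuadraticForm ℝ M}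
    (hQ : ∀ v, Q v = 1 / 2 * B v v) (v w : M) :
    ι Q v * ι Q w + ι Q w * ι Q v = algebraMap ℝ _ (B v w) := by
  rw [ι_mul_ι_add_swap, QuadraticMap.polar, hQ, hQ, hQ]
  congr 1
  simp only [map_add, LinearMap.add_apply, hB w v]
  ring

theorem Algebra.adjoin_range_comp_basis {R M A ι : Type*} [CommRing R] [AddCommGroup M]
    [Module R M] [Ring A] [Algebra R A] (φ : M →ₗ[R] A) (e : Module.Basis ι R M) :
    Algebra.adjoin R (Set.range fun i => φ (e i)) = Algebra.adjoin R (Set.range φ) := by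
  refine le_antisymm (Algebra.adjoin_mono (Set.range_comp_subset_range _ _)) ?_
  refine Algebra.adjoin_le ?_
  rintro _ ⟨v, rfl⟩
  rw [← e.linearCombination_repr v, Finsupp.linearCombination_apply, Finsupp.sum, map_sum]
  exact Subalgebra.sum_mem _ fun i _ => by
    rw [map_smul]; exact Subalgebra.smul_mem _ (Algebra.subset_adjoin (Set.mem_range_self i)) _

namespace UniversalEnvelopingAlgebra

attribute [local instance] LieRing.ofAssociativeRing

variable (R : Type*) {L : Type*} [CommRing R] [LieRing L] [LieAlgebra R L]

theorem ι_mul_ι_sub_ι_mul_ι (v w : L) : ι R v * ι R w - ι R w * ι R v = ι R ⁅v, w⁆ := by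
  rw [LieHom.map_lie, Ring.lie_def]

theorem adjoin_range_ι :
    Algebra.adjoin R (Set.range (ι R : L → UniversalEnvelopingAlgebra R L)) = ⊤ := by
  have : Set.range (ι R : L → UniversalEnvelopingAlgebra R L) =
      mkAlgHom R L '' Set.range (TensorAlgebra.ι R) := by
    rw [← Set.range_comp]; rfl
  rw [this, Algebra.adjoin_image, TensorAlgebra.adjoin_range_ι, Algebra.map_top,
    AlgHom.range_eq_top]
  exact RingCon.mkₐ_surjective _

theorem adjoin_range_ι_basis {ι' : Type*} (e : Module.Basis ι' R L) :
    Algebra.adjoin R (Set.range fun i => ι R (e i)) = ⊤ :=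
  (Algebra.adjoin_range_comp_basis (ι R).toLinearMap e).trans (adjoin_range_ι R)

end UniversalEnvelopingAlgebra

/-- In `𝒲 = U(𝔤) ⊗ Cl(𝔤)`, the element `𝔇²` is central:
`𝔇²·w = w·𝔇²` for all `w ∈ 𝒲`. -/
theorem dirac_square_central
    {n : ℕ} {g : Type*} [LieRing g] [LieAlgebra ℝ g]
    -- the ad-invariant inner product, as a symmetric bilinear form
    (ip : LinearMap.BilinForm ℝ g)
    (ip_symm : ∀ v w : g, ip v w = ip w v)
    (ip_inv : ∀ v w z : g, ip ⁅v, w⁆ z + ip w ⁅v, z⁆ = 0)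
    -- an orthonormal basis
    (e : Module.Basis (Fin n) ℝ g)
    (he : ∀ a b, ip (e a) (e b) = if a = b then (1 : ℝ) else 0)
    -- the quadratic form Q(v) = ½⟨v,v⟩ and its Clifford algebra
    (Q : QuadraticForm ℝ g)
    (hQ : ∀ v, Q v = (1 / 2 : ℝ) * ip v v)
    -- structure constants
    (f : Fin n → Fin n → Fin n → ℝ)
    (hf : ∀ a b c, f a b c = ip ⁅e a, e b⁆ (e c))
    -- the Clifford generators
    (x : Fin n → CliffordAlgebra Q)
    (hx : ∀ a, x a = CliffordAlgebra.ι Q (e a))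
    -- the element γ
    (γ : CliffordAlgebra Q)
    (hγ : γ = (-(1 / 6 : ℝ)) • ∑ a, ∑ b, ∑ c, f a b c • (x a * x b * x c))
    -- the generators of the universal enveloping algebra
    (u : Fin n → UniversalEnvelopingAlgebra ℝ g)
    (hu : ∀ a, u a = UniversalEnvelopingAlgebra.ι ℝ (e a))
    -- the Dirac element 𝔇 in 𝒲 = U(𝔤) ⊗ Cl(𝔤)
    (D : UniversalEnvelopingAlgebra ℝ g ⊗[ℝ] CliffordAlgebra Q)
    (hD : D = ∑ a, u a ⊗ₜ[ℝ] x a + 1 ⊗ₜ[ℝ] γ)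
    :
    ∀ w : UniversalEnvelopingAlgebra ℝ g ⊗[ℝ] CliffordAlgebra Q,
      D * D * w = w * (D * D) := by
  obtain rfl : f = structureConst ip e := funext fun a => funext fun b => funext (hf a b)
  obtain rfl : x = fun a => CliffordAlgebra.ι Q (e a) := funext hx
  obtain rfl : u = fun a => UniversalEnvelopingAlgebra.ι ℝ (e a) := funext hu
  subst hγ hD
  refine commute_cubicDirac_mul_self (fun a b => ?_) (fun a b => ?_)
    (isTotallyAntisymm_structureConst ip_symm ip_inv) (isJacobi_structureConst he) ?_ ?_
  · rw [UniversalEnvelopingAlgebra.ι_mul_ι_sub_ι_mul_ι, lie_eq_sum_structureConst he, map_sum]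
    simp only [map_smul]
  · rw [CliffordAlgebra.ι_mul_ι_add_swap_of_eq_half ip_symm hQ, he]
    split_ifs <;> simp
  · exact UniversalEnvelopingAlgebra.adjoin_range_ι_basis ℝ e
  · rw [Algebra.adjoin_range_comp_basis (CliffordAlgebra.ι Q) e, CliffordAlgebra.adjoin_range_ι]
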